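/- arXiv:1511.03317 — 7 statements merged into one kernel-verified Lean document; each statement's English description precedes it below -/
import Mathlib

section
/- Let X be a loopless digraph with A-Laplacian L = Δ⁺ − A. Then L is normal (LLᵀ = LᵀL) if and only if for every pair of distinct vertices u, v: d⁻(u,v) − d⁺(u,v) = 0 if both or neither of uv, vu are arcs; d⁻(u,v) − d⁺(u,v) = d(u) − d(v) if uv is an arc and vu is not; and d⁻(u,v) − d⁺(u,v) = d(v) − d(u) if vu is an arc and uv is not. Here d(u) denotes the out-degree of u. -/
open Matrix Finset

def adjMat {V : Type*} [Fintype V] (R : V → V → Prop) [DecidableRel R] :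
    Matrix V V ℝ := fun u v => if R u v then 1 else 0

def outDeg {V : Type*} [Fintype V] (R : V → V → Prop) [DecidableRel R] (u : V) : ℕ :=
  (Finset.univ.filter (fun v => R u v)).card

def lap {V : Type*} [Fintype V] [DecidableEq V] (R : V → V → Prop) [DecidableRel R] :
    Matrix V V ℝ :=
  Matrix.diagonal (fun u => (outDeg R u : ℝ)) - adjMat R

/-- Number of common in-neighbours of `u` and `v`. -/
def dMinus {V : Type*} [Fintype V] (R : V → V → Prop) [DecidableRel R] (u v : V) : ℕ :=
  (Finset.univ.filter (fun w => R w u ∧ R w v)).card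

/-- Number of common out-neighbours of `u` and `v`. -/
def dPlus {V : Type*} [Fintype V] (R : V → V → Prop) [DecidableRel R] (u v : V) : ℕ :=
  (Finset.univ.filter (fun w => R u w ∧ R v w)).card

set_option linter.unusedSectionVars false
set_option linter.unusedVariables false

section Aux
variable {V : Type*} [Fintype V] [DecidableEq V] (R : V → V → Prop) [DecidableRel R]

lemma lap_apply' (u w : V) :
    lap R u w = (if u = w then (outDeg R u : ℝ) else 0) - (if R u w then 1 else 0) := by
  simp [lap, adjMat, Matrix.diagonal_apply, Matrix.sub_apply]

lemma dPlus_diag (u : V) : dPlus R u u = outDeg R u := by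
  simp [dPlus, outDeg]

lemma entry_LLT (u v : V) :
    (lap R * (lap R)ᵀ) u v =
      (if u = v then (outDeg R u : ℝ) * (outDeg R v : ℝ) else 0)
        - (outDeg R u : ℝ) * (if R v u then 1 else 0)
        - (outDeg R v : ℝ) * (if R u v then 1 else 0)
        + (dPlus R u v : ℝ) := by
  have key : ∀ w, lap R u w * lap R v w =
      (if u = w then (if u = v then (outDeg R u : ℝ) * (outDeg R v : ℝ) else 0) else 0)
        - (if u = w then (outDeg R u : ℝ) * (if R v u then 1 else 0) else 0)
        - (if v = w then (outDeg R v : ℝ) * (if R u v then 1 else 0) else 0)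
        + (if R u w ∧ R v w then 1 else 0) := by
    intro w
    rw [lap_apply', lap_apply']
    by_cases h1 : u = w <;> by_cases h2 : v = w <;>
      by_cases h3 : R u w <;> by_cases h4 : R v w <;>
        subst_eqs <;> simp_all [eq_comm] <;> ring
  simp only [Matrix.mul_apply, Matrix.transpose_apply, key, Finset.sum_add_distrib,
    Finset.sum_sub_distrib, Finset.sum_ite_eq, Finset.mem_univ, if_true, Finset.sum_boole]
  simp [dPlus]

lemma entry_LTL (u v : V) :
    ((lap R)ᵀ * lap R) u v =
      (if u = v then (outDeg R u : ℝ) * (outDeg R v : ℝ) else 0)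
        - (outDeg R u : ℝ) * (if R u v then 1 else 0)
        - (outDeg R v : ℝ) * (if R v u then 1 else 0)
        + (dMinus R u v : ℝ) := by
  have key : ∀ w, lap R w u * lap R w v =
      (if w = u then (if u = v then (outDeg R u : ℝ) * (outDeg R v : ℝ) else 0) else 0)
        - (if w = u then (outDeg R u : ℝ) * (if R u v then 1 else 0) else 0)
        - (if w = v then (outDeg R v : ℝ) * (if R v u then 1 else 0) else 0)
        + (if R w u ∧ R w v then 1 else 0) := by
    intro w
    rw [lap_apply', lap_apply']
    by_cases h1 : w = u <;> by_cases h2 : w = v <;>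
      by_cases h3 : R w u <;> by_cases h4 : R w v <;>
        subst_eqs <;> simp_all [eq_comm] <;> ring
  simp only [Matrix.mul_apply, Matrix.transpose_apply, key, Finset.sum_add_distrib,
    Finset.sum_sub_distrib, Finset.sum_ite_eq', Finset.mem_univ, if_true, Finset.sum_boole]
  simp [dMinus]

lemma rowsum (w : V) : ∑ v, lap R w v = 0 := by
  simp [lap_apply', Finset.sum_sub_distrib, Finset.sum_ite_eq, Finset.sum_boole, outDeg]

lemma colsum (w : V) : ∑ u, lap R u w = (outDeg R w : ℝ) - (dMinus R w w : ℝ) := by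
  simp [lap_apply', Finset.sum_sub_distrib, Finset.sum_ite_eq', Finset.sum_boole, dMinus]

lemma sum_dPlus_dMinus : ∑ u, (dPlus R u u : ℝ) = ∑ u, (dMinus R u u : ℝ) := by
  have h1 : ∀ u : V, (dPlus R u u : ℝ) = ∑ w, (if R u w then (1:ℝ) else 0) := by
    intro u; simp [dPlus, Finset.sum_boole]
  have h2 : ∀ u : V, (dMinus R u u : ℝ) = ∑ w, (if R w u then (1:ℝ) else 0) := by
    intro u; simp [dMinus, Finset.sum_boole]
  simp only [h1, h2]
  exact Finset.sum_comm

lemma sumsum (f : V → V → ℝ) :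
    ∑ u, ∑ v, ∑ w, f u w * f v w = ∑ w, (∑ u, f u w) ^ 2 := by
  have h : ∀ u, ∑ v, ∑ w, f u w * f v w = ∑ w, f u w * (∑ v, f v w) := by
    intro u
    rw [Finset.sum_comm]
    exact Finset.sum_congr rfl fun w _ => (Finset.mul_sum _ _ _).symm
  simp only [h]
  rw [Finset.sum_comm]
  exact Finset.sum_congr rfl fun w _ => by rw [sq, Finset.sum_mul]

end Aux

theorem stmt1 {V : Type*} [Fintype V] [DecidableEq V] (R : V → V → Prop) [DecidableRel R]
    (hloopless : ∀ u, ¬ R u u) :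
    lap R * (lap R)ᵀ = (lap R)ᵀ * lap R ↔
      ∀ u v : V, u ≠ v →
        (((R u v ∧ R v u) ∨ (¬ R u v ∧ ¬ R v u)) →
            (dMinus R u v : ℤ) - (dPlus R u v : ℤ) = 0) ∧
        ((R u v ∧ ¬ R v u) →
            (dMinus R u v : ℤ) - (dPlus R u v : ℤ) = (outDeg R u : ℤ) - (outDeg R v : ℤ)) ∧
        ((R v u ∧ ¬ R u v) →
            (dMinus R u v : ℤ) - (dPlus R u v : ℤ) = (outDeg R v : ℤ) - (outDeg R u : ℤ)) := by
  constructor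
  · intro h u v huv
    have he : (lap R * (lap R)ᵀ) u v = ((lap R)ᵀ * lap R) u v := by rw [h]
    rw [entry_LLT, entry_LTL] at he
    refine ⟨?_, ?_, ?_⟩
    · rintro (⟨uv, vu⟩ | ⟨uv, vu⟩) <;>
        · simp only [uv, vu, if_true, if_false] at he
          have : (dMinus R u v : ℝ) - (dPlus R u v : ℝ) = 0 := by linarith
          exact_mod_cast this
    · rintro ⟨uv, vu⟩
      simp only [uv, vu, if_true, if_false] at he
      have : (dMinus R u v : ℝ) - (dPlus R u v : ℝ)
          = (outDeg R u : ℝ) - (outDeg R v : ℝ) := by linarith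
      exact_mod_cast this
    · rintro ⟨vu, uv⟩
      simp only [uv, vu, if_true, if_false] at he
      have : (dMinus R u v : ℝ) - (dPlus R u v : ℝ)
          = (outDeg R v : ℝ) - (outDeg R u : ℝ) := by linarith
      exact_mod_cast this
  · intro h
    have hoff : ∀ u v : V, u ≠ v →
        (lap R * (lap R)ᵀ) u v = ((lap R)ᵀ * lap R) u v := by
      intro u v huv
      obtain ⟨h1, h2, h3⟩ := h u v huv
      rw [entry_LLT, entry_LTL]
      by_cases uv : R u v <;> by_cases vu : R v u
      · have hr : (dMinus R u v : ℝ) - (dPlus R u v : ℝ) = 0 := by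
          exact_mod_cast h1 (Or.inl ⟨uv, vu⟩)
        simp only [uv, vu, if_true, if_false]; linarith
      · have hr : (dMinus R u v : ℝ) - (dPlus R u v : ℝ)
            = (outDeg R u : ℝ) - (outDeg R v : ℝ) := by exact_mod_cast h2 ⟨uv, vu⟩
        simp only [uv, vu, if_true, if_false]; linarith
      · have hr : (dMinus R u v : ℝ) - (dPlus R u v : ℝ)
            = (outDeg R v : ℝ) - (outDeg R u : ℝ) := by exact_mod_cast h3 ⟨vu, uv⟩
        simp only [uv, vu, if_true, if_false]; linarith
      · have hr : (dMinus R u v : ℝ) - (dPlus R u v : ℝ) = 0 := by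
          exact_mod_cast h1 (Or.inr ⟨uv, vu⟩)
        simp only [uv, vu, if_true, if_false]; linarith
    -- diagonal difference
    have hdiagdiff : ∀ u : V, (lap R * (lap R)ᵀ) u u - ((lap R)ᵀ * lap R) u u
        = (dPlus R u u : ℝ) - (dMinus R u u : ℝ) := by
      intro u; rw [entry_LLT, entry_LTL]; ring
    have hsum1 : ∑ u, ∑ v, (lap R * (lap R)ᵀ) u v
        = ∑ w, (∑ u, lap R u w) ^ 2 := by
      simpa only [Matrix.mul_apply, Matrix.transpose_apply] using
        sumsum (fun u w => lap R u w)
    have hsum2 : ∑ u, ∑ v, ((lap R)ᵀ * lap R) u v = 0 := by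
      have := sumsum (fun u w => lap R w u)
      simp only [Matrix.mul_apply, Matrix.transpose_apply]
      rw [this]
      simp [rowsum]
    have hsum3 : ∑ u, ∑ v, ((lap R * (lap R)ᵀ) u v - ((lap R)ᵀ * lap R) u v)
        = ∑ u, ((dPlus R u u : ℝ) - (dMinus R u u : ℝ)) := by
      refine Finset.sum_congr rfl fun u _ => ?_
      rw [Finset.sum_eq_single u
        (fun v _ hvu => by rw [hoff u v (Ne.symm hvu), sub_self])
        (fun hu => absurd (Finset.mem_univ u) hu)]
      exact hdiagdiff u
    have hzero : ∑ w, (∑ u, lap R u w) ^ 2 = 0 := by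
      have e1 : ∑ w, (∑ u, lap R u w) ^ 2
          = ∑ u, ((dPlus R u u : ℝ) - (dMinus R u u : ℝ)) := by
        calc ∑ w, (∑ u, lap R u w) ^ 2
            = ∑ u, ∑ v, (lap R * (lap R)ᵀ) u v
              - ∑ u, ∑ v, ((lap R)ᵀ * lap R) u v := by rw [hsum1, hsum2, sub_zero]
          _ = ∑ u, ∑ v, ((lap R * (lap R)ᵀ) u v - ((lap R)ᵀ * lap R) u v) := by
              simp only [← Finset.sum_sub_distrib]
          _ = _ := hsum3
      rw [e1, Finset.sum_sub_distrib, sum_dPlus_dMinus, sub_self]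
    have hcol : ∀ w : V, (dMinus R w w : ℝ) = (outDeg R w : ℝ) := by
      intro w
      have h0 := (Finset.sum_eq_zero_iff_of_nonneg
        (fun w _ => sq_nonneg (∑ u, lap R u w))).mp hzero w (Finset.mem_univ w)
      have h0' := sq_eq_zero_iff.mp h0
      rw [colsum] at h0'
      linarith
    ext u v
    by_cases huv : u = v
    · subst huv
      rw [entry_LLT, entry_LTL]
      have : (dPlus R u u : ℝ) = (dMinus R u u : ℝ) := by
        rw [hcol, dPlus_diag]
      rw [this]
    · exact hoff u v huv
end

section
/- If X is a loopless digraph whose A-Laplacian L = Δ⁺ − A is normal, then the in-degree of every vertex equals its out-degree (i.e., for all u, (AᵀA)(u,u) = (AAᵀ)(u,u)). -/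
open Matrix Finset

/-! Since `A` has zero diagonal, the cross terms `d⁺(u) A(u,u)` vanish, so the `(u,u)` entries of
`L Lᵀ` and `Lᵀ L` are `d⁺(u)²` plus the squared norms of row `u` and of column `u` of `A`. -/

namespace Matrix

variable {n α : Type*} [Fintype n] [DecidableEq n] [CommRing α]

theorem diagonal_sub_mul_transpose_apply_self (d : n → α) (M : Matrix n n α) {u : n}
    (hM : M u u = 0) :
    ((diagonal d - M) * (diagonal d - M)ᵀ) u u = d u ^ 2 + (M * Mᵀ) u u := by
  simp only [transpose_sub, diagonal_transpose, sub_mul, mul_sub, diagonal_mul_diagonal,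
    sub_apply, diagonal_mul, mul_diagonal, transpose_apply, diagonal_apply_eq, hM]
  ring

theorem transpose_diagonal_sub_mul_apply_self (d : n → α) (M : Matrix n n α) {u : n}
    (hM : M u u = 0) :
    ((diagonal d - M)ᵀ * (diagonal d - M)) u u = d u ^ 2 + (Mᵀ * M) u u := by
  simpa using diagonal_sub_mul_transpose_apply_self d Mᵀ (u := u) hM

end Matrix

theorem adjMat_apply_self {V : Type*} [Fintype V] {R : V → V → Prop} [DecidableRel R] {u : V}
    (hu : ¬ R u u) : adjMat R u u = 0 :=
  if_neg hu

theorem stmt2 {V : Type*} [Fintype V] [DecidableEq V] (R : V → V → Prop) [DecidableRel R]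
    (hloopless : ∀ u, ¬ R u u)
    (hnormal : lap R * (lap R)ᵀ = (lap R)ᵀ * lap R) :
    ∀ u : V, ((adjMat R)ᵀ * adjMat R) u u = (adjMat R * (adjMat R)ᵀ) u u := by
  intro u
  have hA : adjMat R u u = 0 := adjMat_apply_self (hloopless u)
  have h := congrFun₂ hnormal u u
  rw [lap, diagonal_sub_mul_transpose_apply_self _ _ hA,
    transpose_diagonal_sub_mul_apply_self _ _ hA] at h
  exact (add_left_cancel h).symm
end

section
/- If X is a weakly connected loopless digraph whose A-Laplacian L = Δ⁺ − A is normal, then X is eulerian, i.e., every vertex has equal in-degree and out-degree. -/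
/-!
The `u`-th diagonal entries of `L Lᵀ` and `Lᵀ L` are the squared norms of row `u` and of
column `u` of `L`. Both contain `L u u ^ 2`, and every other entry of `L` is `0` or `-1`, so
the two squared norms differ by exactly `deg⁺ u - deg⁻ u`.
-/

open Matrix Finset

def inDeg {V : Type*} [Fintype V] (R : V → V → Prop) [DecidableRel R] (u : V) : ℕ :=
  (Finset.univ.filter (fun w => R w u)).card

/-!
The `u`-th diagonal entries of `L Lᵀ` and `Lᵀ L` are the squared norms of row `u` and of
column `u` of `L`. Both contain `L u u ^ 2`, and every other entry of `L` is `0` or `-1`, so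
the two squared norms differ by exactly `deg⁺ u - deg⁻ u`.
-/

section

variable {V : Type*} [Fintype V] (R : V → V → Prop) [DecidableRel R]

theorem sum_adjMat_row (u : V) : ∑ v, adjMat R u v = outDeg R u := by
  simp only [adjMat, sum_boole, outDeg]

theorem sum_adjMat_col (u : V) : ∑ w, adjMat R w u = inDeg R u := by
  simp only [adjMat, sum_boole, inDeg]

variable [DecidableEq V]

theorem lap_sq_of_ne {a b : V} (hab : a ≠ b) : lap R a b ^ 2 = adjMat R a b := by
  simp only [lap, Matrix.sub_apply, diagonal_apply_ne _ hab, zero_sub, neg_sq, adjMat]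
  split_ifs <;> norm_num

theorem sum_lap_row_sq (u : V) :
    ∑ v, lap R u v ^ 2 = lap R u u ^ 2 + (outDeg R u - adjMat R u u) := by
  rw [← add_sum_erase _ _ (mem_univ u),
    sum_congr rfl fun v hv => lap_sq_of_ne R (ne_of_mem_erase hv).symm,
    sum_erase_eq_sub (mem_univ u), sum_adjMat_row]

theorem sum_lap_col_sq (u : V) :
    ∑ w, lap R w u ^ 2 = lap R u u ^ 2 + (inDeg R u - adjMat R u u) := by
  rw [← add_sum_erase _ _ (mem_univ u),
    sum_congr rfl fun w hw => lap_sq_of_ne R (ne_of_mem_erase hw),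
    sum_erase_eq_sub (mem_univ u), sum_adjMat_col]

end

theorem stmt3_general {V : Type*} [Fintype V] [DecidableEq V] (R : V → V → Prop) [DecidableRel R]
    (hnormal : lap R * (lap R)ᵀ = (lap R)ᵀ * lap R) :
    ∀ u : V, inDeg R u = outDeg R u := by
  intro u
  have hdiag : ∑ v, lap R u v ^ 2 = ∑ w, lap R w u ^ 2 := by
    simpa only [mul_apply, transpose_apply, sq] using congrFun (congrFun hnormal u) u
  rw [sum_lap_row_sq, sum_lap_col_sq] at hdiag
  exact_mod_cast (by linarith : (inDeg R u : ℝ) = outDeg R u)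

theorem stmt3 {V : Type*} [Fintype V] [DecidableEq V] (R : V → V → Prop) [DecidableRel R]
    (hloopless : ∀ u, ¬ R u u)
    (hweakconn : ∀ u v : V, Relation.ReflTransGen (fun a b => R a b ∨ R b a) u v)
    (hnormal : lap R * (lap R)ᵀ = (lap R)ᵀ * lap R) :
    ∀ u : V, inDeg R u = outDeg R u :=
  stmt3_general R hnormal
end

section
/- In a Cayley digraph on an abelian group, for any two vertices u and v, the number of common in-neighbours of u and v equals the number of common out-neighbours of u and v. -/
open Finset

private lemma stmt5_aux_A {G : Type*} [CommGroup G] (a b c : G) :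
    a * b * c⁻¹ * a⁻¹ = b * c⁻¹ := by
  rw [mul_right_comm (a * b) c⁻¹ a⁻¹, mul_right_comm a b a⁻¹, mul_inv_cancel, one_mul]

private lemma stmt5_aux_B {G : Type*} [CommGroup G] (a b c : G) :
    a * (a * b * c⁻¹)⁻¹ = c * b⁻¹ := by
  rw [← div_eq_mul_inv, ← div_eq_mul_inv, div_div_eq_mul_div, mul_div_mul_left_eq_div,
    div_eq_mul_inv]

theorem stmt5 {G : Type*} [CommGroup G] [Fintype G] [DecidableEq G]
    (C : Finset G) (hC : (1 : G) ∉ C) (u v : G) :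
    (Finset.univ.filter (fun w => u * w⁻¹ ∈ C ∧ v * w⁻¹ ∈ C)).card =
      (Finset.univ.filter (fun y => y * u⁻¹ ∈ C ∧ y * v⁻¹ ∈ C)).card := by
  apply Finset.card_bij (fun w _ => u * v * w⁻¹)
  · intro w hw
    simp only [mem_filter, mem_univ, true_and] at hw ⊢
    exact ⟨by rw [stmt5_aux_A]; exact hw.2,
           by rw [mul_comm u v, stmt5_aux_A]; exact hw.1⟩
  · intro a _ b _ h
    exact inv_injective (mul_left_cancel h)
  · intro y hy
    refine ⟨u * v * y⁻¹, ?_, ?_⟩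
    · simp only [mem_filter, mem_univ, true_and] at hy ⊢
      exact ⟨by rw [stmt5_aux_B]; exact hy.2,
             by rw [mul_comm u v, stmt5_aux_B]; exact hy.1⟩
    · rw [← div_eq_mul_inv, ← div_eq_mul_inv, div_div_cancel]
end

section
/- Let L be a real normal matrix with eigenvalue 0 of multiplicity 1 and all other eigenvalues having positive real part. Let f(λ) = |λ|²/(2 Re λ) and let θ maximize f among nonzero eigenvalues. If Re(λ) ≥ Re(θ) for all eigenvalues λ ∉ {0, θ}, then for any real α ≤ −f(θ), the second largest singular value of αI + L is |α + θ|; that is, |α + θ| ≥ |α + λ| for every eigenvalue λ ∉ {0, θ}. -/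
open Matrix

def mapC {n : ℕ} (L : Matrix (Fin n) (Fin n) ℝ) : Matrix (Fin n) (Fin n) ℂ :=
  L.map (fun x : ℝ => (x : ℂ))

noncomputable def fval (lam : ℂ) : ℝ := ‖lam‖^2 / (2 * lam.re)

theorem sq_norm_eq_two_mul_fval_mul_re {z : ℂ} (hz : z.re ≠ 0) :
    ‖z‖ ^ 2 = 2 * fval z * z.re := by
  unfold fval
  field_simp

theorem sq_norm_ofReal_add (α : ℝ) (z : ℂ) :
    ‖(α : ℂ) + z‖ ^ 2 = α ^ 2 + 2 * α * z.re + ‖z‖ ^ 2 := by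
  simp only [Complex.sq_norm, Complex.normSq_apply, Complex.add_re, Complex.add_im,
    Complex.ofReal_re, Complex.ofReal_im]
  ring

/-- With `c = fval w`, the hypotheses give `‖z‖² - ‖w‖² ≤ 2c (z.re - w.re)`, so
`‖α + z‖² - ‖α + w‖² ≤ 2 (α + c) (z.re - w.re) ≤ 0`. -/
theorem norm_ofReal_add_le_of_fval_le {z w : ℂ} {α : ℝ} (hz : 0 < z.re) (hw : 0 < w.re)
    (hf : fval z ≤ fval w) (hre : w.re ≤ z.re) (hα : α ≤ -fval w) :
    ‖(α : ℂ) + z‖ ≤ ‖(α : ℂ) + w‖ := by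
  have hz_sq := sq_norm_eq_two_mul_fval_mul_re hz.ne'
  have hw_sq := sq_norm_eq_two_mul_fval_mul_re hw.ne'
  have hsq : ‖(α : ℂ) + z‖ ^ 2 ≤ ‖(α : ℂ) + w‖ ^ 2 := by
    rw [sq_norm_ofReal_add, sq_norm_ofReal_add, hz_sq, hw_sq]
    linarith [mul_le_mul_of_nonneg_right hf hz.le,
      mul_nonpos_of_nonpos_of_nonneg (by linarith : α + fval w ≤ 0) (sub_nonneg.mpr hre)]
  exact pow_le_pow_iff_left₀ (norm_nonneg _) (norm_nonneg _) two_ne_zero |>.mp hsq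

theorem stmt12_general {n : ℕ} (L : Matrix (Fin n) (Fin n) ℝ)
    (hpos : ∀ lam ∈ spectrum ℂ (mapC L), lam ≠ 0 → 0 < lam.re)
    (θ : ℂ) (hθmem : θ ∈ spectrum ℂ (mapC L)) (hθne : θ ≠ 0)
    (hθmax : ∀ lam ∈ spectrum ℂ (mapC L), lam ≠ 0 → fval lam ≤ fval θ)
    (hre : ∀ lam ∈ spectrum ℂ (mapC L), lam ≠ 0 → lam ≠ θ → θ.re ≤ lam.re)
    (α : ℝ) (hα : α ≤ -fval θ) :
    ∀ lam ∈ spectrum ℂ (mapC L), lam ≠ 0 → lam ≠ θ →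
      ‖(α : ℂ) + lam‖ ≤ ‖(α : ℂ) + θ‖ := by
  intro lam hmem hne hneθ
  exact norm_ofReal_add_le_of_fval_le (hpos lam hmem hne) (hpos θ hθmem hθne)
    (hθmax lam hmem hne) (hre lam hmem hne hneθ) hα

theorem stmt12 {n : ℕ} (L : Matrix (Fin n) (Fin n) ℝ)
    (hnormal : L * Lᵀ = Lᵀ * L)
    (h0simple : (mapC L).charpoly.rootMultiplicity 0 = 1)
    (hpos : ∀ lam ∈ spectrum ℂ (mapC L), lam ≠ 0 → 0 < lam.re)
    (θ : ℂ) (hθmem : θ ∈ spectrum ℂ (mapC L)) (hθne : θ ≠ 0)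
    (hθmax : ∀ lam ∈ spectrum ℂ (mapC L), lam ≠ 0 → fval lam ≤ fval θ)
    (hre : ∀ lam ∈ spectrum ℂ (mapC L), lam ≠ 0 → lam ≠ θ → θ.re ≤ lam.re)
    (α : ℝ) (hα : α ≤ -fval θ) :
    ∀ lam ∈ spectrum ℂ (mapC L), lam ≠ 0 → lam ≠ θ →
      ‖(α : ℂ) + lam‖ ≤ ‖(α : ℂ) + θ‖ :=
  stmt12_general L hpos θ hθmem hθne hθmax hre α hα
end

section
/- Let X be a regular tournament on n vertices with A-Laplacian L. Every nonzero eigenvalue of L has real part equal to n/2. -/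
open Matrix Finset

theorem stmt17 {V : Type*} [Fintype V] [DecidableEq V]
    (R : V → V → Prop) [DecidableRel R]
    (hloopless : ∀ u, ¬ R u u)
    (htournament : ∀ u v : V, u ≠ v → (R u v ↔ ¬ R v u))
    (hregular : ∀ u : V, 2 * outDeg R u = Fintype.card V - 1) :
    ∀ lam ∈ spectrum ℂ ((lap R).map (fun x : ℝ => (x : ℂ))), lam ≠ 0 →
      lam.re = (Fintype.card V : ℝ) / 2 := by
  intro lam hlam hne
  set M : Matrix V V ℂ := (lap R).map (fun x : ℝ => (x : ℂ)) with hM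
  -- get an eigenvector
  have hlam' : lam ∈ spectrum ℂ (Matrix.toLinAlgEquiv' M) := by
    rwa [AlgEquiv.spectrum_eq Matrix.toLinAlgEquiv' M]
  have hev : Module.End.HasEigenvalue (Matrix.toLinAlgEquiv' M : Module.End ℂ (V → ℂ)) lam :=
    Module.End.HasEigenvalue.of_mem_spectrum hlam'
  obtain ⟨v, hv⟩ := hev.exists_hasEigenvector
  have hvne : v ≠ 0 := hv.right
  have hmul : M.mulVec v = lam • v := by
    have := hv.apply_eq_smul
    rwa [Matrix.toLinAlgEquiv'_apply] at this
  obtain ⟨u0, hu0⟩ : ∃ u, v u ≠ 0 := by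
    by_contra h
    push_neg at h
    exact hvne (funext h)
  have hVne : Nonempty V := ⟨u0⟩
  have hn1 : 1 ≤ Fintype.card V := Fintype.card_pos
  set n : ℕ := Fintype.card V with hn
  -- indegree + outdegree = n - 1
  have hio : ∀ j, (univ.filter fun u => R u j).card + outDeg R j = n - 1 := by
    intro j
    rw [outDeg, ← Finset.card_union_of_disjoint]
    · have : (univ.filter fun u => R u j) ∪ (univ.filter fun u => R j u)
          = univ.erase j := by
        ext u
        simp only [Finset.mem_union, Finset.mem_filter, Finset.mem_univ, true_and,
          Finset.mem_erase, and_true]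
        constructor
        · rintro (h | h) rfl <;> exact hloopless _ h
        · intro h
          by_cases hr : R u j
          · exact Or.inl hr
          · exact Or.inr ((htournament j u (Ne.symm h)).mpr hr)
      rw [this, Finset.card_erase_of_mem (Finset.mem_univ j), Finset.card_univ]
    · rw [Finset.disjoint_left]
      intro u hu1 hu2
      simp only [Finset.mem_filter, Finset.mem_univ, true_and] at hu1 hu2
      rcases eq_or_ne u j with rfl | h
      · exact hloopless _ hu1
      · exact ((htournament u j h).mp hu1) hu2
  have hinout : ∀ j, (univ.filter fun u => R u j).card = outDeg R j := by
    intro j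
    have h1 := hio j
    have h2 := hregular j
    omega
  -- column sums of lap are zero
  have hcol : ∀ j, ∑ u, lap R u j = 0 := by
    intro j
    simp only [lap, Matrix.sub_apply, Finset.sum_sub_distrib]
    have h1 : ∑ u, Matrix.diagonal (fun u => (outDeg R u : ℝ)) u j = (outDeg R j : ℝ) := by
      rw [Finset.sum_eq_single j]
      · exact Matrix.diagonal_apply_eq _ j
      · intro b _ hb; exact Matrix.diagonal_apply_ne _ hb
      · intro h; exact absurd (Finset.mem_univ j) h
    have h2 : ∑ u, adjMat R u j = (outDeg R j : ℝ) := by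
      simp only [adjMat]
      rw [Finset.sum_boole, hinout j]
    rw [h1, h2, sub_self]
  have hcolM : ∀ j, ∑ u, M u j = 0 := by
    intro j
    simp only [hM, Matrix.map_apply]
    rw [← Complex.ofReal_sum, hcol, Complex.ofReal_zero]
  -- the eigenvector sums to zero
  have hs : (∑ u, v u) = 0 := by
    have h1 : lam * ∑ u, v u = ∑ u, (M.mulVec v) u := by
      rw [hmul, Finset.mul_sum]
      simp [Pi.smul_apply, smul_eq_mul]
    have h2 : ∑ u, (M.mulVec v) u = 0 := by
      simp only [Matrix.mulVec, dotProduct]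
      rw [Finset.sum_comm]
      simp only [← Finset.sum_mul]
      simp [hcolM]
    have := h1.trans h2
    rcases mul_eq_zero.mp this with h | h
    · exact absurd h hne
    · exact h
  -- entrywise identity: M u j + M j u = n * δ_{uj} - 1
  have hcast : ∀ u : V, 2 * (outDeg R u : ℝ) = (n : ℝ) - 1 := by
    intro u
    have h := hregular u
    have h' : ((2 * outDeg R u : ℕ) : ℝ) = ((n - 1 : ℕ) : ℝ) := by exact_mod_cast congrArg Nat.cast h
    rw [Nat.cast_sub hn1] at h'
    push_cast at h' ⊢
    linarith
  have hsym : ∀ u j, M u j + M j u = (n : ℂ) * (if u = j then 1 else 0) - 1 := by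
    intro u j
    have hre : lap R u j + lap R j u = (n : ℝ) * (if u = j then 1 else 0) - 1 := by
      simp only [lap, Matrix.sub_apply, adjMat]
      rcases eq_or_ne u j with rfl | h
      · simp only [Matrix.diagonal_apply_eq, if_pos rfl, if_neg (hloopless u), if_true]
        have := hcast u
        linarith
      · have h1 : (if R u j then (1:ℝ) else 0) + (if R j u then (1:ℝ) else 0) = 1 := by
          by_cases hr : R u j
          · simp [hr, (htournament u j h).mp hr]
          · simp [hr, (htournament j u (Ne.symm h)).mpr hr]
        rw [Matrix.diagonal_apply_ne _ h, Matrix.diagonal_apply_ne' _ h, if_neg h]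
        linarith
    have hm : M u j + M j u = ((lap R u j + lap R j u : ℝ) : ℂ) := by
      simp [hM, Matrix.map_apply]
    rw [hm, hre]
    split_ifs <;> push_cast <;> ring
  -- quadratic forms
  set t : ℂ := ∑ u, (starRingEnd ℂ) (v u) * v u with ht
  have htre : t = ((∑ u, Complex.normSq (v u) : ℝ) : ℂ) := by
    rw [ht, Complex.ofReal_sum]
    congr 1; ext u
    rw [mul_comm, Complex.mul_conj]
  have htne : t ≠ 0 := by
    rw [htre]
    intro h
    rw [Complex.ofReal_eq_zero] at h
    have hpos : 0 < ∑ u, Complex.normSq (v u) := by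
      apply Finset.sum_pos' (fun u _ => Complex.normSq_nonneg _)
      exact ⟨u0, Finset.mem_univ u0, Complex.normSq_pos.mpr hu0⟩
    linarith
  have hA : lam * t = ∑ u, ∑ j, M u j * ((starRingEnd ℂ) (v u) * v j) := by
    have : ∀ u, (starRingEnd ℂ) (v u) * (M.mulVec v) u
        = ∑ j, M u j * ((starRingEnd ℂ) (v u) * v j) := by
      intro u
      simp only [Matrix.mulVec, dotProduct, Finset.mul_sum]
      congr 1; ext j; ring
    calc lam * t = ∑ u, (starRingEnd ℂ) (v u) * (lam * v u) := by
          rw [ht, Finset.mul_sum]; congr 1; ext u; ring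
      _ = ∑ u, (starRingEnd ℂ) (v u) * (M.mulVec v) u := by
          congr 1; ext u; rw [hmul]; simp [smul_eq_mul]
      _ = ∑ u, ∑ j, M u j * ((starRingEnd ℂ) (v u) * v j) := Finset.sum_congr rfl
            (fun u _ => this u)
  have hMreal : ∀ u j, (starRingEnd ℂ) (M u j) = M u j := by
    intro u j
    simp [hM, Matrix.map_apply, Complex.conj_ofReal]
  have hB : (starRingEnd ℂ) lam * t = ∑ u, ∑ j, M j u * ((starRingEnd ℂ) (v u) * v j) := by
    calc (starRingEnd ℂ) lam * t
        = ∑ u, (starRingEnd ℂ) (lam * v u) * v u := by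
          rw [ht, Finset.mul_sum]; congr 1; ext u
          rw [RingHom.map_mul]; ring
      _ = ∑ u, (starRingEnd ℂ) ((M.mulVec v) u) * v u := by
          congr 1; ext u; rw [hmul]; simp [smul_eq_mul]
      _ = ∑ u, ∑ j, M u j * ((starRingEnd ℂ) (v j) * v u) := by
          congr 1; ext u
          simp only [Matrix.mulVec, dotProduct, map_sum, _root_.map_mul, hMreal,
            Finset.sum_mul]
          congr 1; ext j; ring
      _ = ∑ u, ∑ j, M j u * ((starRingEnd ℂ) (v u) * v j) := Finset.sum_comm
  have hkey : lam * t + (starRingEnd ℂ) lam * t = (n : ℂ) * t := by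
    rw [hA, hB, ← Finset.sum_add_distrib]
    have : ∀ u, (∑ j, M u j * ((starRingEnd ℂ) (v u) * v j))
        + (∑ j, M j u * ((starRingEnd ℂ) (v u) * v j))
        = ∑ j, ((n : ℂ) * (if u = j then 1 else 0) - 1) * ((starRingEnd ℂ) (v u) * v j) := by
      intro u
      rw [← Finset.sum_add_distrib]
      congr 1; ext j
      rw [← add_mul, hsym]
    simp only [this]
    have expand : ∀ u, ∑ j, ((n : ℂ) * (if u = j then 1 else 0) - 1)
          * ((starRingEnd ℂ) (v u) * v j)
        = (n : ℂ) * ((starRingEnd ℂ) (v u) * v u)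
          - (starRingEnd ℂ) (v u) * ∑ j, v j := by
      intro u
      simp only [sub_mul, Finset.sum_sub_distrib, one_mul, ite_mul, mul_ite, mul_zero, zero_mul]
      rw [Finset.sum_ite_eq, if_pos (Finset.mem_univ u), Finset.mul_sum, mul_one]
    simp only [expand, hs, mul_zero, sub_zero, ← Finset.mul_sum, ht]
  have hsum : lam + (starRingEnd ℂ) lam = (n : ℂ) := by
    have : (lam + (starRingEnd ℂ) lam) * t = (n : ℂ) * t := by
      rw [add_mul]; exact hkey
    exact mul_right_cancel₀ htne this
  have h2 : 2 * lam.re = (n : ℝ) := by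
    have := congrArg Complex.re hsum
    simp [Complex.add_re, Complex.conj_re] at this
    linarith
  rw [hn] at h2
  linarith
end

section
/- Let X be a connected graph on n vertices with Laplacian eigenvalues 0 = σ₁ < σ₂ ≤ ⋯ ≤ σₙ, and let Y, Z be disjoint vertex sets with no edges between them. Then |Y|·|Z| / ((n−|Y|)(n−|Z|)) ≤ (α + σₙ)² / α², where α = −(σ₂ + σₙ)/2. -/
/-!
Put `y = n·1_Z - |Z|·1` and `z = n·1_Y - |Y|·1`; both are orthogonal to the constants, which span
the kernel of the Laplacian `L` of the connected graph, so `σ₂‖x‖² ≤ ⟪x, Lx⟫ ≤ σₙ‖x‖²` for every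
`x = y + tz`. As there are no edges between `Y` and `Z`, `⟪y, Lz⟫ = 0`, hence `⟪x, Lx⟫` is even in
`t` and `σ₂‖y - tz‖² ≤ σₙ‖y + tz‖²` for all real `t`. The discriminant of this quadratic in `t`
gives `(σₙ + σ₂)²⟪y, z⟫² ≤ (σₙ - σ₂)²‖y‖²‖z‖²`, and with `⟪y, z⟫ = -n|Y||Z|`,
`‖y‖² = n|Z|(n - |Z|)`, `‖z‖² = n|Y|(n - |Y|)` this is the claimed bound.
-/

open Matrix Finset

namespace Matrix.IsHermitian

variable {n : Type*} [Fintype n] {M : Matrix n n ℝ}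

theorem mulVec_dotProduct_comm (hM : M.IsHermitian) (x y : n → ℝ) :
    M *ᵥ x ⬝ᵥ y = x ⬝ᵥ M *ᵥ y := by
  rw [dotProduct_mulVec, ← mulVec_transpose, ← conjTranspose_eq_transpose_of_trivial, hM.eq,
    dotProduct_comm]

theorem sq_mul_dotProduct_le_of_dotProduct_mulVec_eq_zero (hM : M.IsHermitian) {lo hi : ℝ}
    {y z : n → ℝ} (hyz : y ⬝ᵥ M *ᵥ z = 0)
    (hlo : ∀ t : ℝ, lo * ((y + t • z) ⬝ᵥ (y + t • z)) ≤ (y + t • z) ⬝ᵥ M *ᵥ (y + t • z))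
    (hhi : ∀ t : ℝ, (y + t • z) ⬝ᵥ M *ᵥ (y + t • z) ≤ hi * ((y + t • z) ⬝ᵥ (y + t • z))) :
    ((hi + lo) * (y ⬝ᵥ z)) ^ 2 ≤ (hi - lo) ^ 2 * ((y ⬝ᵥ y) * (z ⬝ᵥ z)) := by
  have hzy : z ⬝ᵥ M *ᵥ y = 0 := by rw [← hM.mulVec_dotProduct_comm, dotProduct_comm, hyz]
  have hQ : ∀ t : ℝ,
      (y + t • z) ⬝ᵥ M *ᵥ (y + t • z) = y ⬝ᵥ M *ᵥ y + t ^ 2 * (z ⬝ᵥ M *ᵥ z) := by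
    intro t
    simp only [mulVec_add, mulVec_smul, add_dotProduct, dotProduct_add, smul_dotProduct,
      dotProduct_smul, smul_eq_mul, hyz, hzy]
    ring
  have hN : ∀ t : ℝ,
      (y + t • z) ⬝ᵥ (y + t • z) = y ⬝ᵥ y + 2 * t * (y ⬝ᵥ z) + t ^ 2 * (z ⬝ᵥ z) := by
    intro t
    simp only [add_dotProduct, dotProduct_add, smul_dotProduct, dotProduct_smul, smul_eq_mul,
      dotProduct_comm z y]
    ring
  -- `lo‖y - tz‖² ≤ ⟪y - tz, M(y - tz)⟫ = ⟪y + tz, M(y + tz)⟫ ≤ hi‖y + tz‖²`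
  have hquad : ∀ t : ℝ, 0 ≤ ((hi - lo) * (z ⬝ᵥ z)) * (t * t) + (2 * (hi + lo) * (y ⬝ᵥ z)) * t
      + (hi - lo) * (y ⬝ᵥ y) := by
    intro t
    have h₁ := hlo (-t)
    have h₂ := hhi t
    rw [hQ, hN] at h₁ h₂
    nlinarith
  have := discrim_le_zero hquad
  rw [discrim] at this
  nlinarith

variable [DecidableEq n]

theorem dotProduct_self_eq_sum_sq (hM : M.IsHermitian) (x : n → ℝ) :
    x ⬝ᵥ x = ∑ i, (⇑(hM.eigenvectorBasis i) ⬝ᵥ x) ^ 2 := by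
  have := hM.eigenvectorBasis.sum_inner_mul_inner (WithLp.toLp 2 x) (WithLp.toLp 2 x)
  simp only [EuclideanSpace.inner_eq_star_dotProduct, star_trivial] at this
  rw [← this]
  simp only [sq, dotProduct_comm x]

theorem dotProduct_mulVec_eq_sum (hM : M.IsHermitian) (x : n → ℝ) :
    x ⬝ᵥ M *ᵥ x = ∑ i, hM.eigenvalues i * (⇑(hM.eigenvectorBasis i) ⬝ᵥ x) ^ 2 := by
  have := hM.eigenvectorBasis.sum_inner_mul_inner (WithLp.toLp 2 x) (WithLp.toLp 2 (M *ᵥ x))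
  simp only [EuclideanSpace.inner_eq_star_dotProduct, star_trivial] at this
  rw [dotProduct_comm, ← this]
  refine Finset.sum_congr rfl fun i _ => ?_
  rw [hM.mulVec_dotProduct_comm, hM.mulVec_eigenvectorBasis, dotProduct_smul, smul_eq_mul,
    dotProduct_comm x]
  ring

theorem dotProduct_mulVec_le (hM : M.IsHermitian) {hi : ℝ} (h : ∀ μ ∈ spectrum ℝ M, μ ≤ hi)
    (x : n → ℝ) : x ⬝ᵥ M *ᵥ x ≤ hi * (x ⬝ᵥ x) := by
  rw [hM.dotProduct_mulVec_eq_sum, hM.dotProduct_self_eq_sum_sq, Finset.mul_sum]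
  exact Finset.sum_le_sum fun i _ =>
    mul_le_mul_of_nonneg_right (h _ (hM.eigenvalues_mem_spectrum_real i)) (sq_nonneg _)

theorem le_dotProduct_mulVec (hM : M.IsHermitian) {lo : ℝ}
    (h : ∀ μ ∈ spectrum ℝ M, μ ≠ 0 → lo ≤ μ) {x : n → ℝ} (hx : ∀ v, M *ᵥ v = 0 → v ⬝ᵥ x = 0) :
    lo * (x ⬝ᵥ x) ≤ x ⬝ᵥ M *ᵥ x := by
  rw [hM.dotProduct_mulVec_eq_sum, hM.dotProduct_self_eq_sum_sq, Finset.mul_sum]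
  refine Finset.sum_le_sum fun i _ => ?_
  by_cases hμ : hM.eigenvalues i = 0
  · have hker : M *ᵥ ⇑(hM.eigenvectorBasis i) = 0 := by
      rw [hM.mulVec_eigenvectorBasis, hμ, zero_smul]
    simp [hx _ hker, hμ]
  · exact mul_le_mul_of_nonneg_right (h _ (hM.eigenvalues_mem_spectrum_real i) hμ) (sq_nonneg _)

end Matrix.IsHermitian

section CenteredIndicator

variable {V : Type*} [Fintype V] [DecidableEq V]

def centeredIndicator (s : Finset V) : V → ℝ :=
  fun v => Fintype.card V * (if v ∈ s then 1 else 0) - #s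

theorem sum_centeredIndicator (s : Finset V) : ∑ v, centeredIndicator s v = 0 := by
  simp only [centeredIndicator, Finset.sum_sub_distrib, ← Finset.mul_sum, Finset.sum_boole]
  simp

theorem centeredIndicator_dotProduct (s t : Finset V) :
    centeredIndicator s ⬝ᵥ centeredIndicator t =
      Fintype.card V * (Fintype.card V * #(s ∩ t) - #s * #t) := by
  have hprod : ∀ v, ((if v ∈ s then 1 else 0) * (if v ∈ t then 1 else 0) : ℝ) =
      if v ∈ s ∩ t then 1 else 0 := fun v => by
    by_cases hs : v ∈ s <;> by_cases ht : v ∈ t <;> simp [hs, ht]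
  have key : centeredIndicator s ⬝ᵥ centeredIndicator t = ∑ v, ((Fintype.card V : ℝ) ^ 2 *
      ((if v ∈ s then 1 else 0) * (if v ∈ t then 1 else 0)) - Fintype.card V * #t *
      (if v ∈ s then 1 else 0) - Fintype.card V * #s * (if v ∈ t then 1 else 0) + #s * #t) :=
    Finset.sum_congr rfl fun v _ => by simp only [centeredIndicator]; ring
  simp only [key, hprod, Finset.sum_add_distrib, Finset.sum_sub_distrib, ← Finset.mul_sum,
    Finset.sum_boole, Finset.filter_univ_mem, Finset.sum_const, Finset.card_univ, nsmul_eq_mul]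
  ring

theorem centeredIndicator_dotProduct_self (s : Finset V) :
    centeredIndicator s ⬝ᵥ centeredIndicator s =
      Fintype.card V * #s * (Fintype.card V - #s) := by
  rw [centeredIndicator_dotProduct, Finset.inter_self]
  ring

theorem centeredIndicator_dotProduct_of_disjoint {s t : Finset V} (h : Disjoint s t) :
    centeredIndicator s ⬝ᵥ centeredIndicator t = -(Fintype.card V * #s * #t) := by
  rw [centeredIndicator_dotProduct, Finset.disjoint_iff_inter_eq_empty.mp h, Finset.card_empty]
  push_cast
  ring

end CenteredIndicator

namespace SimpleGraph

variable {V : Type*} [Fintype V] [DecidableEq V] (G : SimpleGraph V) [DecidableRel G.Adj]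

theorem dotProduct_eq_zero_of_lapMatrix_mulVec_eq_zero (hconn : G.Connected) {v x : V → ℝ}
    (hv : G.lapMatrix ℝ *ᵥ v = 0) (hx : ∑ i, x i = 0) : v ⬝ᵥ x = 0 := by
  obtain ⟨i₀⟩ := hconn.nonempty
  have hconst : ∀ i, v i = v i₀ :=
    fun i => (G.lapMatrix_mulVec_eq_zero_iff_forall_reachable.mp hv) i i₀ (hconn i i₀)
  simp only [dotProduct, hconst, ← Finset.mul_sum, hx, mul_zero]

theorem le_dotProduct_lapMatrix_mulVec (hconn : G.Connected) {lo : ℝ}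
    (h : ∀ μ ∈ spectrum ℝ (G.lapMatrix ℝ), μ ≠ 0 → lo ≤ μ) {x : V → ℝ} (hx : ∑ i, x i = 0) :
    lo * (x ⬝ᵥ x) ≤ x ⬝ᵥ G.lapMatrix ℝ *ᵥ x :=
  (G.isHermitian_lapMatrix ℝ).le_dotProduct_mulVec h
    fun _ hv => G.dotProduct_eq_zero_of_lapMatrix_mulVec_eq_zero hconn hv hx

theorem lapMatrix_mulVec_centeredIndicator_apply_eq_zero {t : Finset V} {u : V} (hu : u ∉ t)
    (hadj : ∀ v ∈ t, ¬ G.Adj u v) : (G.lapMatrix ℝ *ᵥ centeredIndicator t) u = 0 := by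
  have hnbr : ∀ v ∈ G.neighborFinset u, centeredIndicator t v = -#t := fun v hv => by
    have hvt : v ∉ t := fun hvt => hadj v hvt ((G.mem_neighborFinset u v).mp hv)
    simp [centeredIndicator, hvt]
  rw [lapMatrix_mulVec_apply, Finset.sum_congr rfl hnbr, Finset.sum_const,
    card_neighborFinset_eq_degree]
  simp [centeredIndicator, hu]

theorem sum_lapMatrix_mulVec (x : V → ℝ) : ∑ u, (G.lapMatrix ℝ *ᵥ x) u = 0 := by
  have := (G.isHermitian_lapMatrix ℝ).mulVec_dotProduct_comm (fun _ => 1) x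
  rw [lapMatrix_mulVec_const_eq_zero, zero_dotProduct] at this
  simpa [dotProduct] using this.symm

theorem centeredIndicator_dotProduct_lapMatrix_mulVec {s t : Finset V} (hst : Disjoint s t)
    (hadj : ∀ u ∈ s, ∀ v ∈ t, ¬ G.Adj u v) :
    centeredIndicator s ⬝ᵥ G.lapMatrix ℝ *ᵥ centeredIndicator t = 0 := by
  have hs : ∀ u, (if u ∈ s then 1 else 0) * (G.lapMatrix ℝ *ᵥ centeredIndicator t) u = 0 :=
    fun u => by
      by_cases hu : u ∈ s
      · rw [G.lapMatrix_mulVec_centeredIndicator_apply_eq_zero (Finset.disjoint_left.mp hst hu)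
          (hadj u hu), mul_zero]
      · simp [hu]
  simp only [dotProduct, centeredIndicator, sub_mul, mul_assoc, hs, Finset.sum_sub_distrib,
    ← Finset.mul_sum, G.sum_lapMatrix_mulVec]
  simp

end SimpleGraph

theorem mul_div_le_of_sq_mul_le {a b n p q : ℝ} (ha : 0 < a) (hb : 0 < b) (hab : a + b ≤ n)
    (hq : q ≠ 0) (h : (q * -(n * b * a)) ^ 2 ≤ p ^ 2 * ((n * b * (n - b)) * (n * a * (n - a)))) :
    a * b / ((n - a) * (n - b)) ≤ p ^ 2 / q ^ 2 := by
  have hn : 0 < n := by linarith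
  rw [div_le_div_iff₀ (mul_pos (by linarith) (by linarith)) (by positivity)]
  refine le_of_mul_le_mul_right ?_ (by positivity : 0 < n ^ 2 * a * b)
  linarith

theorem stmt18 {V : Type*} [Fintype V] [DecidableEq V]
    (G : SimpleGraph V) [DecidableRel G.Adj] (hconn : G.Connected)
    (σ₂ σₙ : ℝ)
    (hσ₂ : IsLeast {x : ℝ | x ∈ spectrum ℝ (G.lapMatrix ℝ) ∧ x ≠ 0} σ₂)
    (hσₙ : IsGreatest (spectrum ℝ (G.lapMatrix ℝ)) σₙ)
    (Y Z : Finset V) (hdisj : Disjoint Y Z)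
    (hsep : ∀ z ∈ Z, ∀ y ∈ Y, ¬ G.Adj z y)
    (α : ℝ) (hα : α = -(σ₂ + σₙ) / 2) :
    ((Y.card : ℝ) * Z.card) /
        (((Fintype.card V : ℝ) - Y.card) * ((Fintype.card V : ℝ) - Z.card)) ≤
      (α + σₙ)^2 / α^2 := by
  have hL := G.isHermitian_lapMatrix ℝ
  have hσ₂_pos : 0 < σ₂ := lt_of_le_of_ne
    ((posSemidef_iff_isHermitian_and_spectrum_nonneg.mp (G.posSemidef_lapMatrix ℝ)).2 hσ₂.1.1)
    hσ₂.1.2.symm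
  have hσ₂_le : σ₂ ≤ σₙ := hσₙ.2 hσ₂.1.1
  rcases Y.card.eq_zero_or_pos with hY | hY
  · simp only [hY, CharP.cast_eq_zero, zero_mul, zero_div]
    positivity
  rcases Z.card.eq_zero_or_pos with hZ | hZ
  · simp only [hZ, CharP.cast_eq_zero, mul_zero, zero_div]
    positivity
  have hsum : ∀ t : ℝ, ∑ v, (centeredIndicator Z + t • centeredIndicator Y) v = 0 := fun t => by
    simp only [Pi.add_apply, Pi.smul_apply, smul_eq_mul, Finset.sum_add_distrib, ← Finset.mul_sum,
      sum_centeredIndicator, mul_zero, add_zero]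
  have key := hL.sq_mul_dotProduct_le_of_dotProduct_mulVec_eq_zero
    (G.centeredIndicator_dotProduct_lapMatrix_mulVec hdisj.symm hsep)
    (fun t => G.le_dotProduct_lapMatrix_mulVec hconn (fun μ hμ hμ0 => hσ₂.2 ⟨hμ, hμ0⟩) (hsum t))
    (fun t => hL.dotProduct_mulVec_le hσₙ.2 _)
  rw [centeredIndicator_dotProduct_of_disjoint hdisj.symm, centeredIndicator_dotProduct_self,
    centeredIndicator_dotProduct_self] at key
  have hcard : (#Y : ℝ) + #Z ≤ Fintype.card V := by
    exact_mod_cast (Finset.card_union_of_disjoint hdisj) ▸ Finset.card_le_univ _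
  calc _ ≤ (σₙ - σ₂) ^ 2 / (σₙ + σ₂) ^ 2 :=
        mul_div_le_of_sq_mul_le (by positivity) (by positivity) hcard (by linarith) key
    _ = (α + σₙ) ^ 2 / α ^ 2 := by
        rw [hα]
        field_simp
        ring
end
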